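/- arXiv:1904.09712 — 8 statements merged into one kernel-verified Lean document; each statement's English description precedes it below -/
import Mathlib

section
/- Let E be a real inner product space and let f, h : E → ℝ be twice continuously differentiable. Suppose f is L_f-relatively smooth with respect to h, i.e. |D²f(x)(v,v)| ≤ L_f·D²h(x)(v,v) for all x, v ∈ E. Then for all x, y ∈ E, |f(x) − f(y) − ⟪∇f(y), x − y⟫| ≤ L_f·D_h(x,y), where D_h(x,y) = h(x) − h(y) − ⟪∇h(y), x − y⟫ is the Bregman divergence of h. -/
open scoped RealInnerProductSpace

/-!
Along the segment `t ↦ y + t • (x - y)` the second derivatives of `L_f h + f` and `L_f h - f`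
are `L_f D²h(v,v) ± D²f(v,v) ≥ 0`, so both restrictions are convex and lie above their tangent
lines at `t = 0`. At `t = 1` this says that the Bregman divergences of `L_f h ± f` are
nonnegative, and since the Bregman divergence is linear in the function, that is
`|D_f(x, y)| ≤ L_f D_h(x, y)`.
-/

section Bregman

variable {E : Type*} [NormedAddCommGroup E] [NormedSpace ℝ E]

noncomputable def bregmanDiv (f : E → ℝ) (x y : E) : ℝ :=
  f x - f y - fderiv ℝ f y (x - y)

lemma bregmanDiv_add {f g : E → ℝ} {y : E} (hf : DifferentiableAt ℝ f y)
    (hg : DifferentiableAt ℝ g y) (x : E) :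
    bregmanDiv (f + g) x y = bregmanDiv f x y + bregmanDiv g x y := by
  simp only [bregmanDiv, fderiv_add hf hg, Pi.add_apply, add_apply]
  ring

lemma bregmanDiv_sub {f g : E → ℝ} {y : E} (hf : DifferentiableAt ℝ f y)
    (hg : DifferentiableAt ℝ g y) (x : E) :
    bregmanDiv (f - g) x y = bregmanDiv f x y - bregmanDiv g x y := by
  simp only [bregmanDiv, fderiv_sub hf hg, Pi.sub_apply, sub_apply]
  ring

lemma bregmanDiv_const_smul {f : E → ℝ} {y : E} (hf : DifferentiableAt ℝ f y) (c : ℝ) (x : E) :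
    bregmanDiv (c • f) x y = c * bregmanDiv f x y := by
  simp only [bregmanDiv, fderiv_const_smul hf, Pi.smul_apply, smul_apply, smul_eq_mul]
  ring

lemma hasDerivAt_comp_add_smul {F : Type*} [NormedAddCommGroup F] [NormedSpace ℝ F]
    {f : E → F} {y v : E} {t : ℝ} (hf : DifferentiableAt ℝ f (y + t • v)) :
    HasDerivAt (fun s : ℝ => f (y + s • v)) (fderiv ℝ f (y + t • v) v) t := by
  have hline : HasDerivAt (fun s : ℝ => y + s • v) v t := by
    simpa using ((hasDerivAt_id t).smul_const v).const_add y
  exact hf.hasFDerivAt.comp_hasDerivAt t hline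

lemma bregmanDiv_nonneg {f : E → ℝ} (hf : ContDiff ℝ 2 f)
    (hf2 : ∀ z v : E, 0 ≤ iteratedFDeriv ℝ 2 f z ![v, v]) (x y : E) :
    0 ≤ bregmanDiv f x y := by
  set v := x - y
  have hf1 : Differentiable ℝ f := hf.differentiable (by norm_num)
  have hDf1 : Differentiable ℝ (fderiv ℝ f) :=
    (hf.fderiv_right (m := 1) (by norm_num)).differentiable one_ne_zero
  have hφ : ∀ t : ℝ, HasDerivAt (fun s : ℝ => f (y + s • v)) (fderiv ℝ f (y + t • v) v) t :=
    fun t => hasDerivAt_comp_add_smul (hf1 _)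
  have hφ' : ∀ t : ℝ, HasDerivAt (fun s : ℝ => fderiv ℝ f (y + s • v) v)
      (fderiv ℝ (fderiv ℝ f) (y + t • v) v v) t :=
    fun t => (ContinuousLinearMap.apply ℝ ℝ v).hasFDerivAt.comp_hasDerivAt t
      (hasDerivAt_comp_add_smul (hDf1 _))
  have hconvex : ConvexOn ℝ Set.univ (fun s : ℝ => f (y + s • v)) := by
    refine convexOn_of_hasDerivWithinAt2_nonneg convex_univ
      (fun t _ => (hφ t).continuousAt.continuousWithinAt)
      (fun t _ => (hφ t).hasDerivWithinAt) (fun t _ => (hφ' t).hasDerivWithinAt) fun t _ => ?_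
    simpa only [iteratedFDeriv_two_apply, Matrix.cons_val_zero, Matrix.cons_val_one]
      using hf2 (y + t • v) v
  have htangent :=
    hconvex.le_slope_of_hasDerivAt (Set.mem_univ 0) (Set.mem_univ 1) one_pos (hφ 0)
  simpa [bregmanDiv, slope, v] using htangent

lemma abs_bregmanDiv_le {f g : E → ℝ} (hf : ContDiff ℝ 2 f) (hg : ContDiff ℝ 2 g)
    (hfg : ∀ z v : E, |iteratedFDeriv ℝ 2 f z ![v, v]| ≤ iteratedFDeriv ℝ 2 g z ![v, v])
    (x y : E) :
    |bregmanDiv f x y| ≤ bregmanDiv g x y := by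
  have hf1 : Differentiable ℝ f := hf.differentiable (by norm_num)
  have hg1 : Differentiable ℝ g := hg.differentiable (by norm_num)
  have hsub := bregmanDiv_nonneg (f := g - f) (hg.sub hf) (fun z v => by
    rw [iteratedFDeriv_sub_apply hg.contDiffAt hf.contDiffAt, sub_apply]
    linarith [le_abs_self (iteratedFDeriv ℝ 2 f z ![v, v]), hfg z v]) x y
  have hadd := bregmanDiv_nonneg (f := g + f) (hg.add hf) (fun z v => by
    rw [iteratedFDeriv_add_apply hg.contDiffAt hf.contDiffAt, add_apply]
    linarith [neg_abs_le (iteratedFDeriv ℝ 2 f z ![v, v]), hfg z v]) x y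
  rw [bregmanDiv_sub (hg1 y) (hf1 y)] at hsub
  rw [bregmanDiv_add (hg1 y) (hf1 y)] at hadd
  exact abs_le.2 ⟨by linarith, by linarith⟩

end Bregman

/-- **Generalized descent lemma under relative smoothness.**
If `f` is `L_f`-relatively smooth with respect to `h`, i.e.
`|D²f(x)(v,v)| ≤ L_f · D²h(x)(v,v)` for all `x, v`, then for all `x, y`,
`|f(x) − f(y) − ⟪∇f(y), x − y⟫| ≤ L_f · D_h(x,y)`, where
`D_h(x,y) = h(x) − h(y) − ⟪∇h(y), x − y⟫` is the Bregman divergence of `h`. -/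
theorem relative_smoothness_descent_lemma
    {E : Type*} [NormedAddCommGroup E] [InnerProductSpace ℝ E]
    (f h : E → ℝ) (gf gh : E → E) (Lf : ℝ)
    (hf : ContDiff ℝ 2 f) (hh : ContDiff ℝ 2 h)
    (hgf : ∀ x v : E, fderiv ℝ f x v = ⟪gf x, v⟫)
    (hgh : ∀ x v : E, fderiv ℝ h x v = ⟪gh x, v⟫)
    (hrel : ∀ x v : E,
      |iteratedFDeriv ℝ 2 f x ![v, v]| ≤ Lf * iteratedFDeriv ℝ 2 h x ![v, v]) :
    ∀ x y : E,
      |f x - f y - ⟪gf y, x - y⟫| ≤ Lf * (h x - h y - ⟪gh y, x - y⟫) := by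
  intro x y
  have hscaled : ∀ z v : E,
      |iteratedFDeriv ℝ 2 f z ![v, v]| ≤ iteratedFDeriv ℝ 2 (Lf • h) z ![v, v] := fun z v => by
    simpa only [iteratedFDeriv_const_smul_apply hh.contDiffAt, smul_apply, smul_eq_mul]
      using hrel z v
  have key := abs_bregmanDiv_le (g := Lf • h) hf (hh.const_smul Lf) hscaled x y
  rwa [bregmanDiv_const_smul (hh.differentiable (by norm_num) y), bregmanDiv, bregmanDiv,
    hgf, hgh] at key
end

section
/- Let E be a finite-dimensional real inner product space, let f : E → ℝ be twice continuously differentiable and bounded below, and let h : E → ℝ be twice continuously differentiable with D²h(x)(v,v) ≥ σ·‖v‖² for all x, v (σ > 0). Suppose f is L_f-relatively smooth with respect to h, i.e. |D²f(x)(v,v)| ≤ L_f·D²h(x)(v,v) for all x, v, and let 0 < η < 1/L_f. Then for every x⁻ ∈ E, the function x ↦ f(x) + (1/η)·D_h(x, x⁻) attains a global minimum at exactly one point of E. (Well-definedness of the Bregman proximal point step.) -/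
/-!
Put `φ(x) = f(x) + (1/η) D_h(x, x⁻)`. Its Hessian is `D²f + (1/η) D²h ≥ (1/η - L_f) D²h`,
which is at least `μ‖v‖²` with `μ = (1/η - L_f) σ > 0`. Restricting `φ` to lines, a uniform
lower bound `μ‖v‖²` on the Hessian gives the strong-convexity inequality
`φ y ≥ φ x + Dφ(x)(y - x) + (μ/2)‖y - x‖²`. Taken at `x = 0` it makes `φ` coercive, so `φ` has a
global minimiser in finite dimension; taken at a minimiser `x₀`, where `Dφ(x₀) = 0`, it shows
that every other point has a strictly larger value.
-/

open scoped RealInnerProductSpace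
open Filter

theorem add_deriv_mul_add_sq_le_of_deriv2_ge {g g' g'' : ℝ → ℝ} {m a b : ℝ}
    (hg : ∀ t, HasDerivAt g (g' t) t) (hg' : ∀ t, HasDerivAt g' (g'' t) t)
    (hm : ∀ t, m ≤ g'' t) (hab : a < b) :
    g a + g' a * (b - a) + m / 2 * (b - a) ^ 2 ≤ g b := by
  set q : ℝ → ℝ := fun t => g t - m / 2 * t ^ 2
  have hq : ∀ t, HasDerivAt q (g' t - m * t) t := fun t =>
    (hg t).sub (((hasDerivAt_pow 2 t).const_mul (m / 2)).congr_deriv (by ring))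
  have hq' : ∀ t, HasDerivAt (fun t => g' t - m * t) (g'' t - m) t := fun t =>
    (hg' t).sub (((hasDerivAt_id t).const_mul m).congr_deriv (by simp))
  have hconv : ConvexOn ℝ Set.univ q :=
    convexOn_of_hasDerivWithinAt2_nonneg convex_univ
      (fun t _ => (hq t).continuousAt.continuousWithinAt)
      (fun t _ => (hq t).hasDerivWithinAt) (fun t _ => (hq' t).hasDerivWithinAt)
      (fun t _ => sub_nonneg.mpr (hm t))
  have hslope := hconv.le_slope_of_hasDerivAt trivial trivial hab (hq a)
  rw [slope_def_field, le_div_iff₀ (sub_pos.mpr hab)] at hslope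
  simp only [q] at hslope
  linarith

theorem tendsto_cocompact_atTop_of_quadratic_le {E : Type*} [NormedAddCommGroup E]
    [ProperSpace E] {φ : E → ℝ} {a b c : ℝ} (hc : 0 < c)
    (hφ : ∀ y, a - b * ‖y‖ + c * ‖y‖ ^ 2 ≤ φ y) :
    Tendsto φ (cocompact E) atTop := by
  have hpoly : Tendsto (fun r : ℝ => a - b * r + c * r ^ 2) atTop atTop := by
    have hlin : Tendsto (fun r : ℝ => c * r - b) atTop atTop :=
      tendsto_atTop_add_const_right _ _ (tendsto_id.const_mul_atTop hc)
    refine (tendsto_atTop_add_const_left _ a (tendsto_id.atTop_mul_atTop₀ hlin)).congr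
      fun r => ?_
    simp only [id]
    ring
  exact tendsto_atTop_mono hφ (hpoly.comp tendsto_norm_cocompact_atTop)

section LowerBound

open AffineMap

variable {E : Type*} [NormedAddCommGroup E] [NormedSpace ℝ E] {φ : E → ℝ} {μ : ℝ}

theorem ContDiff.hasDerivAt_fderiv_apply_lineMap (hφ : ContDiff ℝ 2 φ) (x y : E) (t : ℝ) :
    HasDerivAt (fun s : ℝ => fderiv ℝ φ (AffineMap.lineMap x y s) (y - x))
      (iteratedFDeriv ℝ 2 φ (AffineMap.lineMap x y t) ![y - x, y - x]) t := by
  have hd2 : Differentiable ℝ (fderiv ℝ φ) :=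
    (hφ.fderiv_right le_rfl).differentiable one_ne_zero
  rw [iteratedFDeriv_two_apply]
  exact ((ContinuousLinearMap.apply ℝ ℝ (y - x)).hasFDerivAt.comp _
    (hd2 _).hasFDerivAt).comp_hasDerivAt t hasDerivAt_lineMap

theorem ContDiff.add_fderiv_add_sq_le (hφ : ContDiff ℝ 2 φ)
    (hμ : ∀ x v : E, μ * ‖v‖ ^ 2 ≤ iteratedFDeriv ℝ 2 φ x ![v, v]) (x y : E) :
    φ x + fderiv ℝ φ x (y - x) + μ / 2 * ‖y - x‖ ^ 2 ≤ φ y := by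
  have hg (t : ℝ) : HasDerivAt (fun s : ℝ => φ (AffineMap.lineMap x y s))
      (fderiv ℝ φ (AffineMap.lineMap x y t) (y - x)) t :=
    (hφ.differentiable two_ne_zero _).hasFDerivAt.comp_hasDerivAt t hasDerivAt_lineMap
  have h1d := add_deriv_mul_add_sq_le_of_deriv2_ge hg (hφ.hasDerivAt_fderiv_apply_lineMap x y)
    (fun t => hμ _ (y - x)) zero_lt_one
  simp only [lineMap_apply_zero, lineMap_apply_one, sub_zero, mul_one, one_pow] at h1d
  linarith

theorem existsUnique_forall_le_of_iteratedFDeriv_two_ge [ProperSpace E]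
    (hφ : ContDiff ℝ 2 φ) (hμ0 : 0 < μ)
    (hμ : ∀ x v : E, μ * ‖v‖ ^ 2 ≤ iteratedFDeriv ℝ 2 φ x ![v, v]) :
    ∃! x₀ : E, ∀ x, φ x₀ ≤ φ x := by
  have hquad := hφ.add_fderiv_add_sq_le hμ
  have hcoer : Tendsto φ (cocompact E) atTop := by
    refine tendsto_cocompact_atTop_of_quadratic_le (a := φ 0) (b := ‖fderiv ℝ φ 0‖)
      (half_pos hμ0) fun y => ?_
    have hdir := neg_le_of_abs_le ((fderiv ℝ φ 0).le_opNorm y)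
    have := hquad 0 y
    simp only [sub_zero] at this
    linarith
  obtain ⟨x₀, hx₀⟩ := hφ.continuous.exists_forall_le hcoer
  refine ⟨x₀, hx₀, fun y hy => ?_⟩
  have hcrit : fderiv ℝ φ x₀ = 0 := IsLocalMin.fderiv_eq_zero (Eventually.of_forall hx₀)
  have hgrowth := hquad x₀ y
  rw [hcrit, zero_apply, add_zero] at hgrowth
  have hsq : ‖y - x₀‖ ^ 2 ≤ 0 :=
    nonpos_of_mul_nonpos_right (by linarith [hy x₀]) (half_pos hμ0)
  exact sub_eq_zero.mp (norm_eq_zero.mp ((sq_nonpos_iff _).mp hsq))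

end LowerBound

section Bregman

variable {E : Type*} [NormedAddCommGroup E] [InnerProductSpace ℝ E]

theorem iteratedFDeriv_two_inner_sub_const (g y : E) :
    iteratedFDeriv ℝ 2 (fun x : E => ⟪g, x - y⟫) = 0 := by
  have hd : fderiv ℝ (fun x : E => ⟪g, x - y⟫) = fun _ => innerSL ℝ g :=
    funext fun x => ((innerSL ℝ g).hasFDerivAt.comp x ((hasFDerivAt_id x).sub_const y)).fderiv
  ext x m
  simp [iteratedFDeriv_two_apply, hd]

theorem contDiff_inner_sub_const {n : WithTop ℕ∞} (g y : E) :
    ContDiff ℝ n fun x : E => ⟪g, x - y⟫ :=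
  contDiff_const.inner ℝ (contDiff_id.sub contDiff_const)

theorem contDiff_add_mul_bregman {f h : E → ℝ} (hf : ContDiff ℝ 2 f) (hh : ContDiff ℝ 2 h)
    (c : ℝ) (g y : E) : ContDiff ℝ 2 fun x => f x + c * (h x - h y - ⟪g, x - y⟫) :=
  hf.add (contDiff_const.mul ((hh.sub contDiff_const).sub (contDiff_inner_sub_const g y)))

theorem iteratedFDeriv_two_add_mul_bregman {f h : E → ℝ} (hf : ContDiff ℝ 2 f)
    (hh : ContDiff ℝ 2 h) (c : ℝ) (g y x v : E) :
    iteratedFDeriv ℝ 2 (fun x => f x + c * (h x - h y - ⟪g, x - y⟫)) x ![v, v] =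
      iteratedFDeriv ℝ 2 f x ![v, v] + c * iteratedFDeriv ℝ 2 h x ![v, v] := by
  have hi : ContDiff ℝ 2 fun x : E => ⟪g, x - y⟫ := contDiff_inner_sub_const g y
  have hb : ContDiff ℝ 2 fun x => h x - h y - ⟪g, x - y⟫ := (hh.sub contDiff_const).sub hi
  rw [fun_iteratedFDeriv_add_apply hf.contDiffAt (contDiff_const.mul hb).contDiffAt]
  simp only [← smul_eq_mul (a := c)]
  rw [iteratedFDeriv_const_smul_apply' hb.contDiffAt,
    fun_iteratedFDeriv_sub_apply (hh.sub contDiff_const).contDiffAt hi.contDiffAt,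
    fun_iteratedFDeriv_sub_apply hh.contDiffAt contDiff_const.contDiffAt,
    iteratedFDeriv_two_inner_sub_const, iteratedFDeriv_const_of_ne two_ne_zero]
  simp

end Bregman

theorem bregman_ppm_step_well_defined_general
    {E : Type*} [NormedAddCommGroup E] [InnerProductSpace ℝ E] [FiniteDimensional ℝ E]
    (f h : E → ℝ) (gh : E → E) (σ Lf η : ℝ)
    (hf : ContDiff ℝ 2 f) (hh : ContDiff ℝ 2 h)
    (hσ : 0 < σ)
    (hstrong : ∀ x v : E, iteratedFDeriv ℝ 2 h x ![v, v] ≥ σ * ‖v‖ ^ 2)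
    (hrel : ∀ x v : E,
      |iteratedFDeriv ℝ 2 f x ![v, v]| ≤ Lf * iteratedFDeriv ℝ 2 h x ![v, v])
    (hη0 : 0 < η) (hη1 : η < 1 / Lf)
    (xm : E) :
    ∃! x₀ : E, ∀ x : E,
      f x₀ + (1 / η) * (h x₀ - h xm - ⟪gh xm, x₀ - xm⟫) ≤
        f x + (1 / η) * (h x - h xm - ⟪gh xm, x - xm⟫) := by
  have hLf : 0 < Lf := one_div_pos.mp (hη0.trans hη1)
  have hgap : 0 < 1 / η - Lf := sub_pos.mpr ((lt_one_div hη0 hLf).mp hη1)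
  refine existsUnique_forall_le_of_iteratedFDeriv_two_ge (contDiff_add_mul_bregman hf hh _ _ _)
    (mul_pos hgap hσ) fun x v => ?_
  rw [iteratedFDeriv_two_add_mul_bregman hf hh]
  calc (1 / η - Lf) * σ * ‖v‖ ^ 2
      ≤ (1 / η - Lf) * iteratedFDeriv ℝ 2 h x ![v, v] := by
        rw [mul_assoc]; exact mul_le_mul_of_nonneg_left (hstrong x v) hgap.le
    _ = -(Lf * iteratedFDeriv ℝ 2 h x ![v, v]) + 1 / η * iteratedFDeriv ℝ 2 h x ![v, v] := by
        ring
    _ ≤ iteratedFDeriv ℝ 2 f x ![v, v] + 1 / η * iteratedFDeriv ℝ 2 h x ![v, v] := by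
        gcongr; exact neg_le_of_abs_le (hrel x v)

/-- **Well-definedness of the Bregman proximal point step.**
On a finite-dimensional real inner product space, if `f` is `C²` and bounded below,
`h` is `C²` with `D²h(x)(v,v) ≥ σ‖v‖²` (`σ > 0`), `f` is `L_f`-relatively smooth w.r.t.
`h`, and `0 < η < 1/L_f`, then for every `x⁻` the function
`x ↦ f(x) + (1/η) D_h(x, x⁻)` attains its global minimum at exactly one point. -/
theorem bregman_ppm_step_well_defined
    {E : Type*} [NormedAddCommGroup E] [InnerProductSpace ℝ E] [FiniteDimensional ℝ E]
    (f h : E → ℝ) (gh : E → E) (σ Lf η : ℝ)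
    (hf : ContDiff ℝ 2 f) (hh : ContDiff ℝ 2 h)
    (hbdd : BddBelow (Set.range f))
    (hgh : ∀ x v : E, fderiv ℝ h x v = ⟪gh x, v⟫)
    (hσ : 0 < σ)
    (hstrong : ∀ x v : E, iteratedFDeriv ℝ 2 h x ![v, v] ≥ σ * ‖v‖ ^ 2)
    (hrel : ∀ x v : E,
      |iteratedFDeriv ℝ 2 f x ![v, v]| ≤ Lf * iteratedFDeriv ℝ 2 h x ![v, v])
    (hη0 : 0 < η) (hη1 : η < 1 / Lf)
    (xm : E) :
    ∃! x₀ : E, ∀ x : E,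
      f x₀ + (1 / η) * (h x₀ - h xm - ⟪gh xm, x₀ - xm⟫) ≤
        f x + (1 / η) * (h x - h xm - ⟪gh xm, x - xm⟫) :=
  bregman_ppm_step_well_defined_general f h gh σ Lf η hf hh hσ hstrong hrel hη0 hη1 xm
end

section
/- Let E and F be real inner product spaces, let f : E × F → ℝ be any function, and let h : E × F → ℝ be such that for every y ∈ F the function x ↦ h(x,y) is twice continuously differentiable with second-derivative bilinear form bounded below by σ‖v‖² (σ > 0), and for every x ∈ E the function y ↦ h(x,y) is twice continuously differentiable with second-derivative bilinear form bounded below by σ‖w‖². Let η > 0, (x⁻, y⁻) ∈ E × F, let x₊ be a global minimizer over E of x ↦ f(x, y⁻) + (1/η)·D_{h(·,y⁻)}(x, x⁻), and let y₊ be a global minimizer over F of y ↦ f(x₊, y) + (1/η)·D_{h(x₊,·)}(y, y⁻). Then f(x⁻, y⁻) − f(x₊, y₊) ≥ (σ/(2η))·(‖x₊ − x⁻‖² + ‖y₊ − y⁻‖²). (Sufficient decrease of one Bregman proximal alternating minimization step.) -/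
/-!
A `C²` function whose Hessian is bounded below by `σ‖·‖²` has Bregman divergence at least
`σ/2 ‖u - v‖²`: along the segment from `v` to `u`, `t ↦ g (v + t (u - v)) - σ/2 ‖u - v‖² t²` is
convex, so it lies above its tangent at `0`. Comparing each proximal minimizer with the previous
iterate, where the divergence vanishes, the decrease of `f` in each block is at least `1/η` times
that divergence, and the two blocks add up.
-/

open scoped RealInnerProductSpace

theorem add_add_half_le_of_hasDerivAt_two {φ φ' φ'' : ℝ → ℝ} {c : ℝ}
    (hφ : ∀ t, HasDerivAt φ (φ' t) t) (hφ' : ∀ t, HasDerivAt φ' (φ'' t) t)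
    (hc : ∀ t, c ≤ φ'' t) :
    φ 0 + φ' 0 + c / 2 ≤ φ 1 := by
  have hψ : ∀ t, HasDerivAt (fun t => φ t - c / 2 * t ^ 2) (φ' t - c * t) t := fun t =>
    ((hφ t).sub ((hasDerivAt_pow 2 t).const_mul (c / 2))).congr_deriv (by ring)
  have hψ' : ∀ t, HasDerivAt (fun t => φ' t - c * t) (φ'' t - c) t := fun t =>
    ((hφ' t).sub ((hasDerivAt_id t).const_mul c)).congr_deriv (by ring)
  have hconvex : ConvexOn ℝ Set.univ (fun t => φ t - c / 2 * t ^ 2) :=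
    convexOn_of_hasDerivWithinAt2_nonneg convex_univ
      (fun t _ => (hψ t).continuousAt.continuousWithinAt)
      (fun t _ => (hψ t).hasDerivWithinAt) (fun t _ => (hψ' t).hasDerivWithinAt)
      (fun t _ => sub_nonneg.mpr (hc t))
  have htangent :=
    hconvex.le_slope_of_hasDerivAt (Set.mem_univ 0) (Set.mem_univ 1) zero_lt_one (hψ 0)
  rw [slope_def_field] at htangent
  norm_num at htangent
  linarith

theorem sub_sub_fderiv_ge_of_iteratedFDeriv_two_ge {E : Type*} [NormedAddCommGroup E]
    [NormedSpace ℝ E] {g : E → ℝ} {σ : ℝ} (hg : ContDiff ℝ 2 g)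
    (hσ : ∀ x v, σ * ‖v‖ ^ 2 ≤ iteratedFDeriv ℝ 2 g x ![v, v]) (u v : E) :
    σ / 2 * ‖u - v‖ ^ 2 ≤ g u - g v - fderiv ℝ g v (u - v) := by
  have hline : ∀ t : ℝ, HasDerivAt (fun t : ℝ => v + t • (u - v)) (u - v) t := fun t => by
    simpa using ((hasDerivAt_id t).smul_const (u - v)).const_add v
  have hg₁ : Differentiable ℝ g := hg.differentiable (by norm_num)
  have hg₂ : Differentiable ℝ (fderiv ℝ g) :=
    (hg.fderiv_right (m := 1) (by norm_num)).differentiable (by norm_num)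
  have key := add_add_half_le_of_hasDerivAt_two (c := σ * ‖u - v‖ ^ 2)
    (fun t => (hg₁ _).hasFDerivAt.comp_hasDerivAt t (hline t))
    (fun t => by
      simpa using ((hg₂ _).hasFDerivAt.comp_hasDerivAt t (hline t)).clm_apply
        (hasDerivAt_const t (u - v)))
    (fun t => by simpa [iteratedFDeriv_two_apply] using hσ (v + t • (u - v)) (u - v))
  simp only [Function.comp_apply, zero_smul, add_zero, one_smul, add_sub_cancel] at key
  linarith

theorem bregman_pam_sufficient_decrease_general
    {E F : Type*} [NormedAddCommGroup E] [InnerProductSpace ℝ E]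
    [NormedAddCommGroup F] [InnerProductSpace ℝ F]
    (f h : E × F → ℝ) (ghx : E → F → E) (ghy : E → F → F) (σ η : ℝ)
    (hhx : ∀ y : F, ContDiff ℝ 2 (fun x : E => h (x, y)))
    (hhy : ∀ x : E, ContDiff ℝ 2 (fun y : F => h (x, y)))
    (hghx : ∀ (y : F) (x v : E), fderiv ℝ (fun x' : E => h (x', y)) x v = ⟪ghx x y, v⟫)
    (hghy : ∀ (x : E) (y w : F), fderiv ℝ (fun y' : F => h (x, y')) y w = ⟪ghy x y, w⟫)
    (hstrongx : ∀ (y : F) (x v : E),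
      iteratedFDeriv ℝ 2 (fun x' : E => h (x', y)) x ![v, v] ≥ σ * ‖v‖ ^ 2)
    (hstrongy : ∀ (x : E) (y w : F),
      iteratedFDeriv ℝ 2 (fun y' : F => h (x, y')) y ![w, w] ≥ σ * ‖w‖ ^ 2)
    (hη : 0 < η)
    (xm : E) (ym : F) (xp : E) (yp : F)
    (hminx : ∀ x : E,
      f (xp, ym) + (1 / η) * (h (xp, ym) - h (xm, ym) - ⟪ghx xm ym, xp - xm⟫) ≤
        f (x, ym) + (1 / η) * (h (x, ym) - h (xm, ym) - ⟪ghx xm ym, x - xm⟫))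
    (hminy : ∀ y : F,
      f (xp, yp) + (1 / η) * (h (xp, yp) - h (xp, ym) - ⟪ghy xp ym, yp - ym⟫) ≤
        f (xp, y) + (1 / η) * (h (xp, y) - h (xp, ym) - ⟪ghy xp ym, y - ym⟫)) :
    f (xm, ym) - f (xp, yp) ≥ (σ / (2 * η)) * (‖xp - xm‖ ^ 2 + ‖yp - ym‖ ^ 2) := by
  have hDx := sub_sub_fderiv_ge_of_iteratedFDeriv_two_ge (hhx ym) (hstrongx ym) xp xm
  have hDy := sub_sub_fderiv_ge_of_iteratedFDeriv_two_ge (hhy xp) (hstrongy xp) yp ym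
  rw [hghx] at hDx
  rw [hghy] at hDy
  have hx := hminx xm
  have hy := hminy ym
  simp only [sub_self, inner_zero_right, mul_zero, add_zero] at hx hy
  calc (σ / (2 * η)) * (‖xp - xm‖ ^ 2 + ‖yp - ym‖ ^ 2)
      = (1 / η) * (σ / 2 * ‖xp - xm‖ ^ 2 + σ / 2 * ‖yp - ym‖ ^ 2) := by ring
    _ ≤ (1 / η) * ((h (xp, ym) - h (xm, ym) - ⟪ghx xm ym, xp - xm⟫) +
          (h (xp, yp) - h (xp, ym) - ⟪ghy xp ym, yp - ym⟫)) := by gcongr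
    _ ≤ f (xm, ym) - f (xp, yp) := by linarith

/-- **Sufficient decrease of one Bregman proximal alternating minimization (B-PAM) step.**
`h(·,y)` and `h(x,·)` are `C²` with second derivatives bounded below by `σ‖·‖²`;
`x₊` globally minimizes `x ↦ f(x,y⁻) + (1/η) D_{h(·,y⁻)}(x,x⁻)` and
`y₊` globally minimizes `y ↦ f(x₊,y) + (1/η) D_{h(x₊,·)}(y,y⁻)`. Then
`f(x⁻,y⁻) − f(x₊,y₊) ≥ (σ/(2η))(‖x₊−x⁻‖² + ‖y₊−y⁻‖²)`. -/
theorem bregman_pam_sufficient_decrease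
    {E F : Type*} [NormedAddCommGroup E] [InnerProductSpace ℝ E]
    [NormedAddCommGroup F] [InnerProductSpace ℝ F]
    (f h : E × F → ℝ) (ghx : E → F → E) (ghy : E → F → F) (σ η : ℝ)
    (hhx : ∀ y : F, ContDiff ℝ 2 (fun x : E => h (x, y)))
    (hhy : ∀ x : E, ContDiff ℝ 2 (fun y : F => h (x, y)))
    (hghx : ∀ (y : F) (x v : E), fderiv ℝ (fun x' : E => h (x', y)) x v = ⟪ghx x y, v⟫)
    (hghy : ∀ (x : E) (y w : F), fderiv ℝ (fun y' : F => h (x, y')) y w = ⟪ghy x y, w⟫)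
    (hσ : 0 < σ)
    (hstrongx : ∀ (y : F) (x v : E),
      iteratedFDeriv ℝ 2 (fun x' : E => h (x', y)) x ![v, v] ≥ σ * ‖v‖ ^ 2)
    (hstrongy : ∀ (x : E) (y w : F),
      iteratedFDeriv ℝ 2 (fun y' : F => h (x, y')) y ![w, w] ≥ σ * ‖w‖ ^ 2)
    (hη : 0 < η)
    (xm : E) (ym : F) (xp : E) (yp : F)
    (hminx : ∀ x : E,
      f (xp, ym) + (1 / η) * (h (xp, ym) - h (xm, ym) - ⟪ghx xm ym, xp - xm⟫) ≤
        f (x, ym) + (1 / η) * (h (x, ym) - h (xm, ym) - ⟪ghx xm ym, x - xm⟫))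
    (hminy : ∀ y : F,
      f (xp, yp) + (1 / η) * (h (xp, yp) - h (xp, ym) - ⟪ghy xp ym, yp - ym⟫) ≤
        f (xp, y) + (1 / η) * (h (xp, y) - h (xp, ym) - ⟪ghy xp ym, y - ym⟫)) :
    f (xm, ym) - f (xp, yp) ≥ (σ / (2 * η)) * (‖xp - xm‖ ^ 2 + ‖yp - ym‖ ^ 2) :=
  bregman_pam_sufficient_decrease_general f h ghx ghy σ η hhx hhy hghx hghy hstrongx hstrongy hη xm
    ym xp yp hminx hminy
end

section
/- Let E be a nontrivial finite-dimensional real inner product space, let d ≥ 2 be a natural number, and let α, σ > 0. Define h : E → ℝ by h(x) = (α/d)·‖x‖^d + (σ/2)·‖x‖² + 1. Then h is twice continuously differentiable, for all x, v ∈ E its second derivative satisfies D²h(x)(v,v) ≥ (α·‖x‖^{d−2} + σ)·‖v‖², and h is super-coercive, i.e. h(x)/‖x‖ → ∞ as ‖x‖ → ∞. -/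
/-!
Write `h` as a linear combination of `‖x‖ ^ d`, `‖x‖ ^ 2` and a constant. For real `p ≥ 2` the
gradient of `‖x‖ ^ p` is `p ‖x‖ ^ (p - 2) x`, and `x ↦ ‖x‖ ^ q x` is `C¹` for every real `q ≥ 0`:
away from the origin by the chain rule, at the origin because it is `o(‖x‖)` and its derivative
`‖x‖ ^ q I + q ‖x‖ ^ (q - 2) x xᵀ` has norm at most `(1 + q) ‖x‖ ^ q`. That derivative dominates
`‖x‖ ^ q I`, which gives the Hessian bound, and `h x ≥ (σ / 2) ‖x‖²` gives super-coercivity.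
-/

open scoped RealInnerProductSpace
open Filter Topology Asymptotics

section NormRpow

variable {E : Type*} [NormedAddCommGroup E] [InnerProductSpace ℝ E]

theorem hasFDerivAt_norm_rpow_of_ne_zero (q : ℝ) {x : E} (hx : x ≠ 0) :
    HasFDerivAt (fun y : E ↦ ‖y‖ ^ q) ((q * ‖x‖ ^ (q - 2)) • innerSL ℝ x) x := by
  apply HasStrictFDerivAt.hasFDerivAt
  convert! (hasStrictFDerivAt_norm_sq x).rpow_const (p := q / 2) (by simp [hx]) using 0
  simp_rw [← Real.rpow_natCast_mul (norm_nonneg _), ← Nat.cast_smul_eq_nsmul ℝ, smul_smul]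
  ring_nf

/- At `x = 0` the rank-one term vanishes, whatever the junk value `0 ^ (q - 2)` is. -/
theorem hasFDerivAt_norm_rpow_smul {q : ℝ} (hq : 0 ≤ q) (x : E) :
    HasFDerivAt (fun y : E ↦ ‖y‖ ^ q • y)
      (‖x‖ ^ q • ContinuousLinearMap.id ℝ E + (q * ‖x‖ ^ (q - 2)) • (innerSL ℝ x).smulRight x)
      x := by
  rcases ne_or_eq x 0 with hx | rfl
  · convert (hasFDerivAt_norm_rpow_of_ne_zero q hx).smul (hasFDerivAt_id x) using 1
    congr 1
    ext u
    simp [smul_smul]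
  rcases hq.eq_or_lt with rfl | hq
  · simp only [Real.rpow_zero, one_smul, zero_mul, zero_smul, add_zero]
    exact hasFDerivAt_id 0
  · simp only [norm_zero, Real.zero_rpow hq.ne', zero_smul, map_zero,
      ContinuousLinearMap.smulRight_zero, smul_zero, add_zero]
    refine .of_isLittleO ?_
    have hvanish : (fun y : E ↦ ‖y‖ ^ q) =o[𝓝 0] fun _ ↦ (1 : ℝ) :=
      (isLittleO_one_iff ℝ).mpr <| (continuous_norm.rpow_const fun _ ↦ Or.inr hq.le).tendsto' 0 0
        (by simp [Real.zero_rpow hq.ne'])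
    simpa using hvanish.smul_isBigO (isBigO_refl (fun y : E ↦ y) _)

theorem norm_rpow_sub_two_smul_smulRight {q : ℝ} (hq : 0 ≤ q) (x : E) :
    ‖(q * ‖x‖ ^ (q - 2)) • (innerSL ℝ x).smulRight x‖ = q * ‖x‖ ^ q := by
  rcases eq_or_ne x 0 with rfl | hx
  · rcases hq.eq_or_lt with rfl | hq
    · simp
    · simp [Real.zero_rpow hq.ne']
  · have hx' : ‖x‖ ≠ 0 := norm_ne_zero_iff.mpr hx
    rw [norm_smul, ContinuousLinearMap.norm_smulRight_apply, innerSL_apply_norm,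
      Real.norm_of_nonneg (by positivity), mul_assoc, ← pow_two,
      ← Real.rpow_add_natCast hx', Nat.cast_ofNat, sub_add_cancel]

theorem contDiff_one_norm_rpow_smul {q : ℝ} (hq : 0 ≤ q) :
    ContDiff ℝ 1 (fun y : E ↦ ‖y‖ ^ q • y) := by
  rw [contDiff_one_iff_fderiv]
  refine ⟨fun x ↦ (hasFDerivAt_norm_rpow_smul hq x).differentiableAt, ?_⟩
  refine (continuous_congr fun x ↦ (hasFDerivAt_norm_rpow_smul hq x).fderiv).mpr ?_
  have hpow : Continuous fun x : E ↦ ‖x‖ ^ q := continuous_norm.rpow_const fun _ ↦ Or.inr hq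
  refine (hpow.smul continuous_const).add (continuous_iff_continuousAt.mpr fun x ↦ ?_)
  rcases ne_or_eq x 0 with hx | rfl
  · have hcoeff : ContinuousAt (fun y : E ↦ ‖y‖ ^ (q - 2)) x :=
      continuous_norm.continuousAt.rpow_const (.inl (norm_ne_zero_iff.mpr hx))
    have hrank : Continuous fun y : E ↦ (innerSL ℝ y).smulRight y := by fun_prop
    exact (continuousAt_const.mul hcoeff).smul hrank.continuousAt
  · rw [ContinuousAt, tendsto_iff_norm_sub_tendsto_zero]
    simp only [map_zero, ContinuousLinearMap.zero_smulRight, smul_zero, sub_zero,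
      norm_rpow_sub_two_smul_smulRight hq]
    convert (hpow.tendsto 0).const_mul q
    simpa using (norm_rpow_sub_two_smul_smulRight hq (0 : E)).symm

theorem fderiv_norm_rpow_eq_innerSL {p : ℝ} (hp : 1 < p) :
    fderiv ℝ (fun x : E ↦ ‖x‖ ^ p) = fun x ↦ innerSL ℝ (p • ‖x‖ ^ (p - 2) • x) := by
  ext x u
  simp [fderiv_norm_rpow x hp, smul_smul]

theorem contDiff_two_norm_rpow {p : ℝ} (hp : 2 ≤ p) : ContDiff ℝ 2 (fun x : E ↦ ‖x‖ ^ p) := by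
  rw [show (2 : WithTop ℕ∞) = 1 + 1 from rfl, contDiff_succ_iff_fderiv,
    fderiv_norm_rpow_eq_innerSL (by linarith)]
  refine ⟨differentiable_norm_rpow (by linarith), by simp, ?_⟩
  exact (innerSL ℝ).contDiff.comp ((contDiff_one_norm_rpow_smul (by linarith)).const_smul p)

theorem iteratedFDeriv_two_norm_rpow {p : ℝ} (hp : 2 ≤ p) (x u v : E) :
    iteratedFDeriv ℝ 2 (fun x : E ↦ ‖x‖ ^ p) x ![u, v] =
      p * (‖x‖ ^ (p - 2) * ⟪u, v⟫ + (p - 2) * ‖x‖ ^ (p - 4) * (⟪x, u⟫ * ⟪x, v⟫)) := by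
  have hH : HasFDerivAt (fun y : E ↦ innerSL ℝ (p • ‖y‖ ^ (p - 2) • y)) _ x :=
    (innerSL ℝ).hasFDerivAt.comp x
      ((hasFDerivAt_norm_rpow_smul (sub_nonneg.mpr hp) x).const_smul p)
  rw [iteratedFDeriv_two_apply, fderiv_norm_rpow_eq_innerSL (by linarith), hH.fderiv]
  simp only [ContinuousLinearMap.comp_apply, add_apply, smul_apply,
    ContinuousLinearMap.id_apply, ContinuousLinearMap.smulRight_apply, Matrix.cons_val_zero,
    Matrix.cons_val_one, map_add, map_smul, smul_eq_mul]
  rw [innerSL_apply_apply, innerSL_apply_apply, innerSL_apply_apply, sub_sub,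
    two_add_two_eq_four]

theorem le_iteratedFDeriv_two_norm_rpow_diag {p : ℝ} (hp : 2 ≤ p) (x v : E) :
    p * ‖x‖ ^ (p - 2) * ‖v‖ ^ 2 ≤ iteratedFDeriv ℝ 2 (fun x : E ↦ ‖x‖ ^ p) x ![v, v] := by
  rw [iteratedFDeriv_two_norm_rpow hp, real_inner_self_eq_norm_sq]
  have hrank : 0 ≤ (p - 2) * ‖x‖ ^ (p - 4) * (⟪x, v⟫ * ⟪x, v⟫) :=
    mul_nonneg (mul_nonneg (by linarith) (by positivity)) (mul_self_nonneg _)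
  nlinarith

end NormRpow

theorem tendsto_div_norm_atTop_of_mul_sq_le {F : Type*} [SeminormedAddCommGroup F] {f : F → ℝ}
    {c : ℝ} (hc : 0 < c) (hf : ∀ x, c * ‖x‖ ^ 2 ≤ f x) :
    Tendsto (fun x ↦ f x / ‖x‖) (comap norm atTop) atTop := by
  have hnorm : Tendsto (fun x : F ↦ ‖x‖) (comap norm atTop) atTop := tendsto_comap
  refine tendsto_atTop_mono' _ ?_ (hnorm.const_mul_atTop hc)
  filter_upwards [hnorm.eventually (eventually_gt_atTop 0)] with x hx
  rw [le_div_iff₀ hx]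
  linarith [hf x]

theorem polynomial_kernel_properties_general
    {E : Type*} [NormedAddCommGroup E] [InnerProductSpace ℝ E]
    (d : ℕ) (hd : 2 ≤ d) (α σ : ℝ) (hα : 0 < α) (hσ : 0 < σ)
    (h : E → ℝ)
    (hdef : ∀ x : E, h x = (α / d) * ‖x‖ ^ d + (σ / 2) * ‖x‖ ^ 2 + 1) :
    ContDiff ℝ 2 h ∧
      (∀ x v : E,
        iteratedFDeriv ℝ 2 h x ![v, v] ≥ (α * ‖x‖ ^ (d - 2) + σ) * ‖v‖ ^ 2) ∧
      Tendsto (fun x : E => h x / ‖x‖) (comap norm atTop) atTop := by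
  have hd' : (2 : ℝ) ≤ d := by exact_mod_cast hd
  have hh : h = (fun x : E ↦ (α / d) • ‖x‖ ^ (d : ℝ)) + (fun x ↦ (σ / 2) • ‖x‖ ^ (2 : ℝ))
      + fun _ ↦ 1 := by
    funext x
    simp [hdef, Real.rpow_natCast]
  have hdiff : ContDiff ℝ 2 (fun x : E ↦ (α / d) • ‖x‖ ^ (d : ℝ)) :=
    (contDiff_two_norm_rpow hd').const_smul _
  have hsq : ContDiff ℝ 2 (fun x : E ↦ (σ / 2) • ‖x‖ ^ (2 : ℝ)) :=
    (contDiff_two_norm_rpow le_rfl).const_smul _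
  refine ⟨hh ▸ (hdiff.add hsq).add contDiff_const, fun x v ↦ ?_, ?_⟩
  · rw [hh, iteratedFDeriv_add_apply (f := _ + _) (hdiff.add hsq).contDiffAt
        contDiff_const.contDiffAt, iteratedFDeriv_add_apply hdiff.contDiffAt hsq.contDiffAt,
      iteratedFDeriv_const_smul_apply' (contDiff_two_norm_rpow hd').contDiffAt,
      iteratedFDeriv_const_smul_apply' (contDiff_two_norm_rpow le_rfl).contDiffAt,
      iteratedFDeriv_const_of_ne two_ne_zero]
    simp only [add_apply, smul_apply, Pi.zero_apply, add_zero, smul_eq_mul, ge_iff_le]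
    have hA := le_iteratedFDeriv_two_norm_rpow_diag hd' x v
    have hS := le_iteratedFDeriv_two_norm_rpow_diag le_rfl x v
    rw [show (d : ℝ) - 2 = (d - 2 : ℕ) by push_cast [hd]; ring, Real.rpow_natCast] at hA
    rw [sub_self, Real.rpow_zero, mul_one] at hS
    have hd0 : (d : ℝ) ≠ 0 := by positivity
    calc (α * ‖x‖ ^ (d - 2) + σ) * ‖v‖ ^ 2
        = α / d * (d * ‖x‖ ^ (d - 2) * ‖v‖ ^ 2) + σ / 2 * (2 * ‖v‖ ^ 2) := by field_simp
      _ ≤ _ := by gcongr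
  · refine tendsto_div_norm_atTop_of_mul_sq_le (half_pos hσ) fun x ↦ ?_
    rw [hdef]
    have : 0 ≤ α / d * ‖x‖ ^ d := by positivity
    linarith

/-- The Bregman kernel `h(x) = (α/d)‖x‖^d + (σ/2)‖x‖² + 1` (with `d ≥ 2`, `α, σ > 0`)
is twice continuously differentiable, its second derivative satisfies
`D²h(x)(v,v) ≥ (α‖x‖^{d−2} + σ)‖v‖²`, and `h` is super-coercive. -/
theorem polynomial_kernel_properties
    {E : Type*} [NormedAddCommGroup E] [InnerProductSpace ℝ E]
    [FiniteDimensional ℝ E] [Nontrivial E]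
    (d : ℕ) (hd : 2 ≤ d) (α σ : ℝ) (hα : 0 < α) (hσ : 0 < σ)
    (h : E → ℝ)
    (hdef : ∀ x : E, h x = (α / d) * ‖x‖ ^ d + (σ / 2) * ‖x‖ ^ 2 + 1) :
    ContDiff ℝ 2 h ∧
      (∀ x v : E,
        iteratedFDeriv ℝ 2 h x ![v, v] ≥ (α * ‖x‖ ^ (d - 2) + σ) * ‖v‖ ^ 2) ∧
      Tendsto (fun x : E => h x / ‖x‖) (comap norm atTop) atTop :=
  polynomial_kernel_properties_general d hd α σ hα hσ h hdef
end

section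
/- Let E be a nontrivial finite-dimensional real inner product space, let d ≥ 2 be a natural number, let α, σ > 0, and define h : E → ℝ by h(x) = (α/d)·‖x‖^d + (σ/2)·‖x‖² + 1. Let f : E → ℝ be twice continuously differentiable and suppose there exist constants C₁, C₂ > 0 such that |D²f(x)(v,v)| ≤ (C₁ + C₂·‖x‖^{d−2})·‖v‖² for all x, v ∈ E. Then f is L_f-relatively smooth with respect to h for every L_f ≥ max{C₁/σ, C₂/α}, i.e. |D²f(x)(v,v)| ≤ L_f·D²h(x)(v,v) for all x, v ∈ E. -/
/-!
The gradient of `h` is `∇h(x) = (α‖x‖^(d-2) + σ) x`, so for `x ≠ 0`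
`D²h(x)(v,v) = (α‖x‖^(d-2) + σ)‖v‖² + α(d-2)‖x‖^(d-4)⟪x,v⟫² ≥ (α‖x‖^(d-2) + σ)‖v‖²`,
and the same lower bound holds at `x = 0`. Since `C₁ ≤ L_f σ` and `C₂ ≤ L_f α`, the growth bound
on `D²f` is at most `L_f` times this lower bound.
-/

open Asymptotics

theorem iteratedFDeriv_two_apply_of_hasFDerivAt {𝕜 E F : Type*} [NontriviallyNormedField 𝕜]
    [NormedAddCommGroup E] [NormedSpace 𝕜 E] [NormedAddCommGroup F] [NormedSpace 𝕜 F]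
    {φ : E → F} {G : E → E →L[𝕜] F} {B : E →L[𝕜] E →L[𝕜] F} {x : E}
    (hφ : ∀ y, HasFDerivAt φ (G y) y) (hG : HasFDerivAt G B x) (v w : E) :
    iteratedFDeriv 𝕜 2 φ x ![v, w] = B v w := by
  rw [iteratedFDeriv_two_apply, funext fun y => (hφ y).fderiv, hG.fderiv]
  simp

section InnerProductSpace

variable {E : Type*} [NormedAddCommGroup E] [InnerProductSpace ℝ E]

theorem hasFDerivAt_norm_of_ne_zero {x : E} (hx : x ≠ 0) :
    HasFDerivAt (‖·‖) (‖x‖⁻¹ • innerSL ℝ x) x := by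
  have hsqrt := (hasStrictFDerivAt_norm_sq x).hasFDerivAt.sqrt (by simpa using hx)
  simp only [Real.sqrt_sq (norm_nonneg _)] at hsqrt
  convert hsqrt using 1
  rw [two_smul, ← two_smul ℝ, smul_smul]
  congr 1
  field_simp

theorem hasFDerivAt_norm_pow_of_ne_zero {x : E} (hx : x ≠ 0) (m : ℕ) :
    HasFDerivAt (fun y : E => ‖y‖ ^ m) ((m * ‖x‖ ^ (m - 1) * ‖x‖⁻¹) • innerSL ℝ x) x := by
  have hpow := (hasDerivAt_pow m ‖x‖).comp_hasFDerivAt x (hasFDerivAt_norm_of_ne_zero hx)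
  rwa [smul_smul] at hpow

theorem hasFDerivAt_norm_pow {k : ℕ} (hk : 2 ≤ k) (x : E) :
    HasFDerivAt (fun y : E => ‖y‖ ^ k) ((k * ‖x‖ ^ (k - 2)) • innerSL ℝ x) x := by
  have h := hasFDerivAt_norm_rpow x (p := k) (by exact_mod_cast hk)
  simp only [Real.rpow_natCast] at h
  rwa [← Nat.cast_ofNat, ← Nat.cast_sub hk, Real.rpow_natCast] at h

theorem exists_hasFDerivAt_smul_innerSL {g : E → ℝ} {c : ℝ} {x : E}
    (hg : HasFDerivAt g (c • innerSL ℝ x) x) (hc : 0 ≤ c) :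
    ∃ B : E →L[ℝ] E →L[ℝ] ℝ, HasFDerivAt (fun y : E => g y • innerSL ℝ y) B x ∧
      ∀ v, g x * ‖v‖ ^ 2 ≤ B v v := by
  refine ⟨_, hg.smul (innerSL ℝ).hasFDerivAt, fun v => ?_⟩
  simp only [add_apply, smul_apply, ContinuousLinearMap.smulRight_apply, coe_innerSL_apply,
    smul_eq_mul]
  rw [innerSL_apply_apply, innerSL_apply_apply, real_inner_self_eq_norm_sq]
  nlinarith [mul_nonneg hc (mul_self_nonneg (inner ℝ x v))]

-- At `0` the factor `‖y‖ ^ m` need not be differentiable (`m = 1`),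
-- but the product is `O(‖y‖ ^ (m + 1))`.
theorem hasFDerivAt_norm_pow_smul_innerSL_zero {m : ℕ} (hm : m ≠ 0) :
    HasFDerivAt (fun y : E => ‖y‖ ^ m • innerSL ℝ y) (0 : E →L[ℝ] E →L[ℝ] ℝ) 0 := by
  rw [hasFDerivAt_iff_isLittleO_nhds_zero]
  refine IsBigO.trans_isLittleO (g := fun y : E => ‖y‖ ^ (m + 1)) ?_
    (isLittleO_norm_pow_id (by omega))
  refine IsBigO.of_bound 1 (Filter.Eventually.of_forall fun y => ?_)
  simp [norm_smul, innerSL_apply_norm, pow_succ]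

theorem exists_hasFDerivAt_norm_pow_smul_innerSL (m : ℕ) (x : E) :
    ∃ B : E →L[ℝ] E →L[ℝ] ℝ, HasFDerivAt (fun y : E => ‖y‖ ^ m • innerSL ℝ y) B x ∧
      ∀ v, ‖x‖ ^ m * ‖v‖ ^ 2 ≤ B v v := by
  rcases ne_or_eq x 0 with hx | rfl
  · exact exists_hasFDerivAt_smul_innerSL (hasFDerivAt_norm_pow_of_ne_zero hx m) (by positivity)
  rcases eq_or_ne m 0 with rfl | hm
  · have hconst : HasFDerivAt (fun y : E => ‖y‖ ^ 0) ((0 : ℝ) • innerSL ℝ (0 : E)) 0 := by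
      simpa using hasFDerivAt_const (1 : ℝ) (0 : E)
    simpa using exists_hasFDerivAt_smul_innerSL hconst le_rfl
  · exact ⟨0, hasFDerivAt_norm_pow_smul_innerSL_zero hm, fun v => by simp [hm]⟩

noncomputable def normPowKernel (d : ℕ) (α σ : ℝ) (x : E) : ℝ :=
  α / d * ‖x‖ ^ d + σ / 2 * ‖x‖ ^ 2 + 1

theorem hasFDerivAt_normPowKernel {d : ℕ} (hd : 2 ≤ d) (α σ : ℝ) (x : E) :
    HasFDerivAt (normPowKernel d α σ)
      (α • ‖x‖ ^ (d - 2) • innerSL ℝ x + σ • innerSL ℝ x) x := by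
  have hd₀ : (d : ℝ) ≠ 0 := by positivity
  refine ((((hasFDerivAt_norm_pow hd x).const_mul (α / d)).add
    ((hasFDerivAt_norm_pow le_rfl x).const_mul (σ / 2))).add_const 1).congr_fderiv ?_
  ext v
  simp only [Nat.cast_ofNat, tsub_self, pow_zero, mul_one, add_apply, smul_apply,
    coe_innerSL_apply, smul_eq_mul]
  field_simp

theorem le_iteratedFDeriv_two_normPowKernel {d : ℕ} (hd : 2 ≤ d) {α : ℝ} (hα : 0 ≤ α)
    (σ : ℝ) (x v : E) :
    (α * ‖x‖ ^ (d - 2) + σ) * ‖v‖ ^ 2 ≤ iteratedFDeriv ℝ 2 (normPowKernel d α σ) x ![v, v] := by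
  obtain ⟨B, hB, hBv⟩ := exists_hasFDerivAt_norm_pow_smul_innerSL (d - 2) x
  have hgrad := (hB.const_smul α).add ((innerSL ℝ).hasFDerivAt.const_smul σ)
  rw [iteratedFDeriv_two_apply_of_hasFDerivAt (hasFDerivAt_normPowKernel hd α σ) hgrad]
  simp only [add_apply, smul_apply, smul_eq_mul]
  rw [innerSL_apply_apply, real_inner_self_eq_norm_sq]
  nlinarith [mul_le_mul_of_nonneg_left (hBv v) hα]

end InnerProductSpace

theorem relative_smoothness_from_hessian_growth_general
    {E : Type*} [NormedAddCommGroup E] [InnerProductSpace ℝ E]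
    (d : ℕ) (hd : 2 ≤ d) (α σ : ℝ) (hα : 0 < α) (hσ : 0 < σ)
    (h : E → ℝ)
    (hdef : ∀ x : E, h x = (α / d) * ‖x‖ ^ d + (σ / 2) * ‖x‖ ^ 2 + 1)
    (f : E → ℝ)
    (C₁ C₂ : ℝ) (hC₁ : 0 < C₁)
    (hgrowth : ∀ x v : E,
      |iteratedFDeriv ℝ 2 f x ![v, v]| ≤ (C₁ + C₂ * ‖x‖ ^ (d - 2)) * ‖v‖ ^ 2)
    (Lf : ℝ) (hLf : max (C₁ / σ) (C₂ / α) ≤ Lf) :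
    ∀ x v : E,
      |iteratedFDeriv ℝ 2 f x ![v, v]| ≤ Lf * iteratedFDeriv ℝ 2 h x ![v, v] := by
  intro x v
  obtain rfl : h = normPowKernel d α σ := funext hdef
  have hLσ : C₁ ≤ Lf * σ := (div_le_iff₀ hσ).1 ((le_max_left _ _).trans hLf)
  have hLα : C₂ ≤ Lf * α := (div_le_iff₀ hα).1 ((le_max_right _ _).trans hLf)
  have hLf₀ : 0 ≤ Lf := (div_pos hC₁ hσ).le.trans ((le_max_left _ _).trans hLf)
  calc |iteratedFDeriv ℝ 2 f x ![v, v]|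
      ≤ (C₁ + C₂ * ‖x‖ ^ (d - 2)) * ‖v‖ ^ 2 := hgrowth x v
    _ ≤ (Lf * σ + Lf * α * ‖x‖ ^ (d - 2)) * ‖v‖ ^ 2 := by gcongr
    _ = Lf * ((α * ‖x‖ ^ (d - 2) + σ) * ‖v‖ ^ 2) := by ring
    _ ≤ Lf * iteratedFDeriv ℝ 2 (normPowKernel d α σ) x ![v, v] := by
      gcongr
      exact le_iteratedFDeriv_two_normPowKernel hd hα.le σ x v

/-- If `|D²f(x)(v,v)| ≤ (C₁ + C₂‖x‖^{d−2})‖v‖²` for all `x, v`, then `f` is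
`L_f`-relatively smooth with respect to the kernel
`h(x) = (α/d)‖x‖^d + (σ/2)‖x‖² + 1` for every `L_f ≥ max{C₁/σ, C₂/α}`. -/
theorem relative_smoothness_from_hessian_growth
    {E : Type*} [NormedAddCommGroup E] [InnerProductSpace ℝ E]
    [FiniteDimensional ℝ E] [Nontrivial E]
    (d : ℕ) (hd : 2 ≤ d) (α σ : ℝ) (hα : 0 < α) (hσ : 0 < σ)
    (h : E → ℝ)
    (hdef : ∀ x : E, h x = (α / d) * ‖x‖ ^ d + (σ / 2) * ‖x‖ ^ 2 + 1)
    (f : E → ℝ) (hf : ContDiff ℝ 2 f)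
    (C₁ C₂ : ℝ) (hC₁ : 0 < C₁) (hC₂ : 0 < C₂)
    (hgrowth : ∀ x v : E,
      |iteratedFDeriv ℝ 2 f x ![v, v]| ≤ (C₁ + C₂ * ‖x‖ ^ (d - 2)) * ‖v‖ ^ 2)
    (Lf : ℝ) (hLf : max (C₁ / σ) (C₂ / α) ≤ Lf) :
    ∀ x v : E,
      |iteratedFDeriv ℝ 2 f x ![v, v]| ≤ Lf * iteratedFDeriv ℝ 2 h x ![v, v] :=
  relative_smoothness_from_hessian_growth_general d hd α σ hα hσ h hdef f C₁ C₂ hC₁ hgrowth Lf hLf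
end

section
/- Let n ≥ 1, let H and F be real symmetric n×n matrices, suppose H is positive definite, suppose F has a negative direction, i.e. there exists v ≠ 0 with vᵀFv < 0, and let η > 0. Then there exists a real number μ > 1 such that det((1 − μ)·H − η·F) = 0; equivalently, the matrix H⁻¹(H − ηF) has a real eigenvalue strictly greater than 1. (Strict saddles are unstable fixed points of Bregman gradient descent.) -/
/-!
Write `H = Bᴴ B` with `B` invertible. The congruent matrix `M = B⁻ᴴ F B⁻¹` is Hermitian and,
like `F`, not positive semidefinite, so it has an eigenpair `M u = λ u` with `λ < 0`. Then
`w = B⁻¹ u` solves the generalized eigenproblem `F w = λ H w`, and `μ = 1 - ηλ > 1` makes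
`((1 - μ) H - η F) w = 0`.
-/

open Matrix
open scoped MatrixOrder ComplexOrder

namespace Matrix

variable {𝕜 n : Type*} [RCLike 𝕜] [Fintype n] [DecidableEq n]

theorem IsHermitian.exists_eigenvalues_neg_of_not_posSemidef {M : Matrix n n 𝕜}
    (hM : M.IsHermitian) (hM' : ¬M.PosSemidef) : ∃ i, hM.eigenvalues i < 0 := by
  simpa [hM.posSemidef_iff_eigenvalues_nonneg, Pi.le_def] using hM'

theorem PosDef.exists_generalized_eigenvalue_neg {H F : Matrix n n 𝕜} (hH : H.PosDef)
    (hF : F.IsHermitian) (hF' : ¬F.PosSemidef) :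
    ∃ l : ℝ, l < 0 ∧ ∃ w ≠ 0, F *ᵥ w = l • H *ᵥ w := by
  obtain ⟨B, rfl⟩ := CStarAlgebra.nonneg_iff_eq_star_mul_self.mp hH.posSemidef.nonneg
  lift B to (Matrix n n 𝕜)ˣ using isUnit_of_mul_isUnit_right hH.isUnit
  set U : Matrix n n 𝕜 := ↑B⁻¹
  have hBU : (B : Matrix n n 𝕜) * U = 1 := B.mul_inv
  have hUB : U * B = 1 := B.inv_mul
  set M := star U * F * U
  have hM : M.IsHermitian := isHermitian_conjTranspose_mul_mul _ hF
  have hM' : ¬M.PosSemidef := by rwa [IsUnit.posSemidef_star_left_conjugate_iff B⁻¹.isUnit]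
  have hFM : F = star (B : Matrix n n 𝕜) * M * B := by
    rw [← mul_assoc, ← mul_assoc, ← star_mul, hUB, star_one, one_mul, mul_assoc, hUB, mul_one]
  obtain ⟨i, hi⟩ := hM.exists_eigenvalues_neg_of_not_posSemidef hM'
  set u := ⇑(hM.eigenvectorBasis i)
  have hu : u ≠ 0 := by simpa [u] using hM.eigenvectorBasis.orthonormal.ne_zero i
  have hBUu : (B : Matrix n n 𝕜) *ᵥ (U *ᵥ u) = u := by rw [mulVec_mulVec, hBU, one_mulVec]
  refine ⟨hM.eigenvalues i, hi, U *ᵥ u, ?_, ?_⟩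
  · exact ((mulVec_injective_of_isUnit B⁻¹.isUnit).ne_iff' (mulVec_zero _)).mpr hu
  · calc F *ᵥ (U *ᵥ u) = star (B : Matrix n n 𝕜) *ᵥ (M *ᵥ u) := by
          rw [hFM, ← mulVec_mulVec, ← mulVec_mulVec, hBUu]
      _ = hM.eigenvalues i • star (B : Matrix n n 𝕜) *ᵥ u := by
          rw [hM.mulVec_eigenvectorBasis, mulVec_smul]
      _ = _ := by rw [← mulVec_mulVec, hBUu]

end Matrix

theorem bgd_strict_saddle_unstable_general
    (n : ℕ)
    (H F : Matrix (Fin n) (Fin n) ℝ)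
    (hFsymm : F.IsSymm)
    (hHpd : H.PosDef)
    (hFneg : ∃ v : Fin n → ℝ, v ≠ 0 ∧ v ⬝ᵥ (F *ᵥ v) < 0)
    (η : ℝ) (hη : 0 < η) :
    ∃ μ : ℝ, 1 < μ ∧ ((1 - μ) • H - η • F).det = 0 := by
  have hF : ¬F.PosSemidef := fun hF ↦ by
    obtain ⟨v, -, hv⟩ := hFneg
    exact hv.not_ge (by simpa using hF.dotProduct_mulVec_nonneg v)
  obtain ⟨l, hl, w, hw, hFw⟩ :=
    hHpd.exists_generalized_eigenvalue_neg (isHermitian_iff_isSymm.mpr hFsymm) hF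
  refine ⟨1 - η * l, by nlinarith, exists_mulVec_eq_zero_iff.mp ⟨w, hw, ?_⟩⟩
  rw [sub_mulVec, smul_mulVec, smul_mulVec, hFw, smul_smul, sub_sub_cancel, sub_self]

/-- **Strict saddles are unstable fixed points of Bregman gradient descent.**
If `H` is symmetric positive definite, `F` is symmetric with a negative direction, and
`η > 0`, then there is `μ > 1` with `det((1 − μ)H − ηF) = 0`; equivalently,
`H⁻¹(H − ηF)` has a real eigenvalue strictly greater than `1`. -/
theorem bgd_strict_saddle_unstable
    (n : ℕ) (hn : 1 ≤ n)
    (H F : Matrix (Fin n) (Fin n) ℝ)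
    (hHsymm : H.IsSymm) (hFsymm : F.IsSymm)
    (hHpd : H.PosDef)
    (hFneg : ∃ v : Fin n → ℝ, v ≠ 0 ∧ v ⬝ᵥ (F *ᵥ v) < 0)
    (η : ℝ) (hη : 0 < η) :
    ∃ μ : ℝ, 1 < μ ∧ ((1 - μ) • H - η • F).det = 0 :=
  bgd_strict_saddle_unstable_general n H F hFsymm hHpd hFneg η hη
end

section
/- Let n ≥ 1, let H and F be real symmetric n×n matrices, suppose H is positive definite, suppose F has a negative direction, i.e. there exists v ≠ 0 with vᵀFv < 0, let η > 0, and suppose H + η·F is positive definite. Then there exists a real number μ > 1 such that det((1 − μ)·H − μ·η·F) = 0; equivalently, the matrix (H + ηF)⁻¹H has a real eigenvalue strictly greater than 1. (Strict saddles are unstable fixed points of the Bregman proximal point method.) -/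
open Matrix

/-!
With `A = H + ηF` positive definite and `R = A^{1/2}`, we have
`(1 - μ)H - μηF = H - μA = R (M - μ) R` for the symmetric matrix `M = R⁻¹ H R⁻¹`, so it suffices
that `M` has an eigenvalue above `1`. At `w = R v`, for a negative direction `v` of `F`, the
Rayleigh quotient of `M` is `vᵀHv / vᵀAv > 1` because `vᵀAv = vᵀHv + η vᵀFv`; so `M ≰ 1` in the
Loewner order, i.e. the spectrum of `M` is not bounded by `1`.
-/

namespace Matrix

open scoped MatrixOrder

variable {n : Type*} [Fintype n] [DecidableEq n]

lemma IsHermitian.exists_mem_spectrum_gt_of_lt_dotProduct {M : Matrix n n ℝ} (hM : M.IsHermitian)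
    {c : ℝ} {w : n → ℝ} (h : c * (w ⬝ᵥ w) < w ⬝ᵥ (M *ᵥ w)) : ∃ μ ∈ spectrum ℝ M, c < μ := by
  by_contra! hle
  have hMc : (algebraMap ℝ _ c - M).PosSemidef :=
    le_iff.1 ((le_algebraMap_iff_spectrum_le hM.isSelfAdjoint).2 hle)
  have := hMc.dotProduct_mulVec_nonneg w
  rw [star_trivial, Algebra.algebraMap_eq_smul_one, sub_mulVec, smul_mulVec, one_mulVec,
    dotProduct_sub, dotProduct_smul, smul_eq_mul] at this
  linarith

lemma PosDef.exists_det_sub_smul_eq_zero_of_lt_dotProduct {A H : Matrix n n ℝ} (hA : A.PosDef)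
    (hH : H.IsHermitian) {c : ℝ} {v : n → ℝ} (h : c * (v ⬝ᵥ (A *ᵥ v)) < v ⬝ᵥ (H *ᵥ v)) :
    ∃ μ, c < μ ∧ (H - μ • A).det = 0 := by
  set R := CFC.sqrt A
  have hRR : R * R = A := CFC.sqrt_mul_sqrt_self A hA.posSemidef.nonneg
  have hR : IsUnit R := CFC.isUnit_sqrt_iff_isStrictlyPositive.2 hA.isStrictlyPositive
  have hRT : Rᵀ = R := (CFC.sqrt_nonneg A).posSemidef.isHermitian
  have hRinvT : R⁻¹ᵀ = R⁻¹ := by rw [transpose_nonsing_inv, hRT]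
  have hRinvR : R⁻¹ * R = 1 := nonsing_inv_mul R ((isUnit_iff_isUnit_det R).1 hR)
  set M := R⁻¹ * H * R⁻¹
  have hM : M.IsHermitian := by
    simpa [hRinvT] using isHermitian_mul_mul_conjTranspose R⁻¹ hH
  have hww : (R *ᵥ v) ⬝ᵥ (R *ᵥ v) = v ⬝ᵥ (A *ᵥ v) := by
    rw [← hRR, ← mulVec_mulVec, dotProduct_mulVec v, ← mulVec_transpose, hRT]
  have hwMw : (R *ᵥ v) ⬝ᵥ (M *ᵥ (R *ᵥ v)) = v ⬝ᵥ (H *ᵥ v) := by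
    rw [mulVec_mulVec, mul_assoc, hRinvR, mul_one, ← mulVec_mulVec, dotProduct_mulVec,
      ← mulVec_transpose, hRinvT, mulVec_mulVec, hRinvR, one_mulVec]
  obtain ⟨μ, hμM, hcμ⟩ :=
    hM.exists_mem_spectrum_gt_of_lt_dotProduct (w := R *ᵥ v) (by rwa [hww, hwMw])
  refine ⟨μ, hcμ, ?_⟩
  have hRRinv : R * R⁻¹ = 1 := mul_nonsing_inv R ((isUnit_iff_isUnit_det R).1 hR)
  have hcong : μ • A - H = R * (algebraMap ℝ _ μ - M) * R := by
    rw [Algebra.algebraMap_eq_smul_one, mul_sub, sub_mul, mul_smul_one, smul_mul_assoc, hRR]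
    simp only [M, ← mul_assoc, hRRinv, one_mul]
    rw [mul_assoc, hRinvR, mul_one]
  have hX : (algebraMap ℝ _ μ - M).det = 0 := by
    simpa [isUnit_iff_isUnit_det] using spectrum.mem_iff.1 hμM
  rw [← neg_sub, det_neg, hcong, det_mul, det_mul, hX, mul_zero, zero_mul, mul_zero]

end Matrix

theorem bppm_strict_saddle_unstable_general
    (n : ℕ)
    (H F : Matrix (Fin n) (Fin n) ℝ)
    (hHsymm : H.IsSymm)
    (hFneg : ∃ v : Fin n → ℝ, v ≠ 0 ∧ v ⬝ᵥ (F *ᵥ v) < 0)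
    (η : ℝ) (hη : 0 < η)
    (hpd : (H + η • F).PosDef) :
    ∃ μ : ℝ, 1 < μ ∧ ((1 - μ) • H - (μ * η) • F).det = 0 := by
  obtain ⟨v, -, hvF⟩ := hFneg
  have hlt : 1 * (v ⬝ᵥ ((H + η • F) *ᵥ v)) < v ⬝ᵥ (H *ᵥ v) := by
    rw [add_mulVec, dotProduct_add, smul_mulVec, dotProduct_smul, smul_eq_mul]
    nlinarith
  obtain ⟨μ, hμ, hdet⟩ :=
    hpd.exists_det_sub_smul_eq_zero_of_lt_dotProduct (isHermitian_iff_isSymm.2 hHsymm) hlt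
  refine ⟨μ, hμ, ?_⟩
  convert hdet using 2
  module

/-- **Strict saddles are unstable fixed points of the Bregman proximal point method.**
If `H` is symmetric positive definite, `F` is symmetric with a negative direction,
`η > 0`, and `H + ηF` is positive definite, then there is `μ > 1` with
`det((1 − μ)H − μηF) = 0`; equivalently, `(H + ηF)⁻¹H` has a real eigenvalue strictly
greater than `1`. -/
theorem bppm_strict_saddle_unstable
    (n : ℕ) (hn : 1 ≤ n)
    (H F : Matrix (Fin n) (Fin n) ℝ)
    (hHsymm : H.IsSymm) (hFsymm : F.IsSymm)
    (hHpd : H.PosDef)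
    (hFneg : ∃ v : Fin n → ℝ, v ≠ 0 ∧ v ⬝ᵥ (F *ᵥ v) < 0)
    (η : ℝ) (hη : 0 < η)
    (hpd : (H + η • F).PosDef) :
    ∃ μ : ℝ, 1 < μ ∧ ((1 - μ) • H - (μ * η) • F).det = 0 :=
  bppm_strict_saddle_unstable_general n H F hHsymm hFneg η hη hpd
end

section
/- Let n, m ≥ 1, let H₁ be a real symmetric positive definite n×n matrix, H₂ a real symmetric positive definite m×m matrix, F₁₁ a real symmetric n×n matrix, F₂₂ a real symmetric m×m matrix, and F₁₂ a real n×m matrix, and suppose the symmetric block matrix F := [[F₁₁, F₁₂], [F₁₂ᵀ, F₂₂]] has a negative direction, i.e. there exists z ≠ 0 with zᵀFz < 0. Let η > 0. Then there exists μ ∈ (0,1) such that the block matrix J(μ) := [[((1−μ)/η)·H₁ + μ·F₁₁, √μ·F₁₂], [√μ·F₁₂ᵀ, ((1−μ)/η)·H₂ + μ·F₂₂]] is singular, i.e. det(J(μ)) = 0. (Key matrix lemma showing strict saddles are unstable fixed points of Bregman proximal alternating linearized minimization.) -/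
/-!
`J(μ)` is a continuous path of symmetric matrices from `J(0) = η⁻¹ · diag(H₁, H₂)`, which is
positive definite, to `J(1) = F`, which is not positive semidefinite. Positive semidefiniteness
is a closed condition and, among symmetric matrices, positive definiteness is an open one (by
compactness of the unit sphere). Hence the path can only leave the positive semidefinite cone
after passing through a positive semidefinite matrix that is not positive definite, i.e. a
singular one.
-/

open Matrix Filter Topology Set
open scoped ComplexOrder

namespace Matrix

variable {ι : Type*} [Fintype ι]

theorem isClosed_setOf_posSemidef : IsClosed {M : Matrix ι ι ℝ | M.PosSemidef} := by
  have hset : {M : Matrix ι ι ℝ | M.PosSemidef} =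
      {M | Mᴴ = M} ∩ ⋂ v : ι → ℝ, {M | 0 ≤ v ⬝ᵥ (M *ᵥ v)} := by
    ext M; simp [posSemidef_iff_dotProduct_mulVec, IsHermitian]
  rw [hset]
  exact (isClosed_eq (by fun_prop) continuous_id).inter
    (isClosed_iInter fun v => isClosed_le continuous_const (by fun_prop))

theorem PosDef.eventually_dotProduct_mulVec_pos {M : Matrix ι ι ℝ} (hM : M.PosDef) :
    ∀ᶠ N in 𝓝 M, ∀ v ≠ 0, 0 < v ⬝ᵥ (N *ᵥ v) := by
  have hsphere : ∀ᶠ N in 𝓝 M, ∀ v ∈ Metric.sphere (0 : ι → ℝ) 1, 0 < v ⬝ᵥ (N *ᵥ v) := by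
    refine (isCompact_sphere 0 1).eventually_forall_of_forall_eventually fun v hv => ?_
    have hq : Continuous fun p : Matrix ι ι ℝ × (ι → ℝ) => p.2 ⬝ᵥ (p.1 *ᵥ p.2) := by
      fun_prop
    have hpos : 0 < v ⬝ᵥ (M *ᵥ v) := by
      simpa using hM.dotProduct_mulVec_pos (ne_zero_of_mem_sphere one_ne_zero ⟨v, hv⟩)
    exact (hq.tendsto (M, v)).eventually_const_lt hpos
  refine hsphere.mono fun N hN v hv => ?_
  have hnorm : 0 < ‖v‖⁻¹ := inv_pos.2 (norm_pos_iff.2 hv)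
  have := hN (‖v‖⁻¹ • v) (by
    rw [mem_sphere_zero_iff_norm, norm_smul, norm_inv, norm_norm,
      inv_mul_cancel₀ (norm_ne_zero_iff.2 hv)])
  rw [mulVec_smul, dotProduct_smul, smul_dotProduct, smul_eq_mul, smul_eq_mul] at this
  exact (mul_pos_iff_of_pos_left hnorm).1 ((mul_pos_iff_of_pos_left hnorm).1 this)

theorem PosDef.fromBlocks_zero {𝕜 m n : Type*} [RCLike 𝕜] [Fintype m] [Fintype n]
    [DecidableEq m] [DecidableEq n] {A : Matrix m m 𝕜} {D : Matrix n n 𝕜}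
    (hA : A.PosDef) (hD : D.PosDef) : (fromBlocks A 0 0 D).PosDef := by
  have := hA.isUnit.invertible
  have hpsd : (fromBlocks A 0 0 D).PosSemidef := by
    simpa using (PosDef.fromBlocks₁₁ 0 D hA).2 (by simpa using hD.posSemidef)
  rw [hpsd.posDef_iff_det_ne_zero, det_fromBlocks_zero₁₂]
  exact mul_ne_zero hA.det_pos.ne' hD.det_pos.ne'

theorem exists_det_eq_zero_of_posDef_of_not_posSemidef [DecidableEq ι]
    {J : ℝ → Matrix ι ι ℝ}
    (hJ : Continuous J) (hherm : ∀ t, (J t).IsHermitian) {a b : ℝ} (hab : a ≤ b)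
    (ha : (J a).PosDef) (hb : ¬(J b).PosSemidef) : ∃ t ∈ Ioo a b, (J t).det = 0 := by
  by_contra! hdet
  have hclosed : IsClosed {t | (J t).PosSemidef} := isClosed_setOf_posSemidef.preimage hJ
  refine hb ((hclosed.inter isClosed_Icc).Icc_subset_of_forall_mem_nhdsWithin ha.posSemidef ?_
    ⟨hab, le_rfl⟩)
  rintro t ⟨ht, hat, htb⟩
  have hpd : (J t).PosDef := by
    rcases hat.eq_or_lt with rfl | hat
    · exact ha
    · exact ht.posDef_iff_det_ne_zero.2 (hdet t ⟨hat, htb⟩)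
  have hnear := (hJ.tendsto t).eventually hpd.eventually_dotProduct_mulVec_pos
  exact mem_nhdsWithin_of_mem_nhds <| hnear.mono fun s hs =>
    (PosDef.of_dotProduct_mulVec_pos (hherm s) (by simpa using hs)).posSemidef

end Matrix

theorem bpalm_strict_saddle_unstable_general
    (n m : ℕ)
    (H₁ : Matrix (Fin n) (Fin n) ℝ) (H₂ : Matrix (Fin m) (Fin m) ℝ)
    (F₁₁ : Matrix (Fin n) (Fin n) ℝ) (F₂₂ : Matrix (Fin m) (Fin m) ℝ)
    (F₁₂ : Matrix (Fin n) (Fin m) ℝ)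
    (hF₁₁symm : F₁₁.IsSymm) (hF₂₂symm : F₂₂.IsSymm)
    (hH₁pd : H₁.PosDef) (hH₂pd : H₂.PosDef)
    (hFneg : ∃ z : (Fin n ⊕ Fin m) → ℝ, z ≠ 0 ∧
      z ⬝ᵥ ((Matrix.fromBlocks F₁₁ F₁₂ F₁₂ᵀ F₂₂) *ᵥ z) < 0)
    (η : ℝ) (hη : 0 < η) :
    ∃ μ : ℝ, 0 < μ ∧ μ < 1 ∧
      (Matrix.fromBlocks
        (((1 - μ) / η) • H₁ + μ • F₁₁) (Real.sqrt μ • F₁₂)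
        (Real.sqrt μ • F₁₂ᵀ) (((1 - μ) / η) • H₂ + μ • F₂₂)).det = 0 := by
  set J : ℝ → Matrix (Fin n ⊕ Fin m) (Fin n ⊕ Fin m) ℝ := fun μ => fromBlocks
    (((1 - μ) / η) • H₁ + μ • F₁₁) (Real.sqrt μ • F₁₂)
    (Real.sqrt μ • F₁₂ᵀ) (((1 - μ) / η) • H₂ + μ • F₂₂)
  have hJ : Continuous J := by fun_prop
  have hF₁₁ : F₁₁.IsHermitian := isHermitian_iff_isSymm.2 hF₁₁symm
  have hF₂₂ : F₂₂.IsHermitian := isHermitian_iff_isSymm.2 hF₂₂symm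
  have hherm : ∀ μ, (J μ).IsHermitian := fun μ =>
    .fromBlocks ((hH₁pd.isHermitian.smul (.all _)).add (hF₁₁.smul (.all _))) (by simp)
      ((hH₂pd.isHermitian.smul (.all _)).add (hF₂₂.smul (.all _)))
  have hJ0 : (J 0).PosDef := by
    simpa [J] using
      PosDef.fromBlocks_zero (hH₁pd.smul (inv_pos.2 hη)) (hH₂pd.smul (inv_pos.2 hη))
  have hJ1 : ¬(J 1).PosSemidef := fun hpsd => by
    obtain ⟨z, -, hz⟩ := hFneg
    exact hz.not_ge (by simpa [J] using hpsd.dotProduct_mulVec_nonneg z)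
  obtain ⟨μ, ⟨hμ0, hμ1⟩, hdet⟩ :=
    exists_det_eq_zero_of_posDef_of_not_posSemidef hJ hherm zero_le_one hJ0 hJ1
  exact ⟨μ, hμ0, hμ1, hdet⟩

/-- **Key matrix lemma for B-PALM: strict saddles are unstable fixed points.**
With `H₁, H₂` symmetric positive definite, `F₁₁, F₂₂` symmetric, and the block matrix
`F = [[F₁₁, F₁₂], [F₁₂ᵀ, F₂₂]]` having a negative direction, for any `η > 0` there is
`μ ∈ (0,1)` making the block matrix
`J(μ) = [[((1−μ)/η)H₁ + μF₁₁, √μ F₁₂], [√μ F₁₂ᵀ, ((1−μ)/η)H₂ + μF₂₂]]` singular. -/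
theorem bpalm_strict_saddle_unstable
    (n m : ℕ) (hn : 1 ≤ n) (hm : 1 ≤ m)
    (H₁ : Matrix (Fin n) (Fin n) ℝ) (H₂ : Matrix (Fin m) (Fin m) ℝ)
    (F₁₁ : Matrix (Fin n) (Fin n) ℝ) (F₂₂ : Matrix (Fin m) (Fin m) ℝ)
    (F₁₂ : Matrix (Fin n) (Fin m) ℝ)
    (hH₁symm : H₁.IsSymm) (hH₂symm : H₂.IsSymm)
    (hF₁₁symm : F₁₁.IsSymm) (hF₂₂symm : F₂₂.IsSymm)
    (hH₁pd : H₁.PosDef) (hH₂pd : H₂.PosDef)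
    (hFneg : ∃ z : (Fin n ⊕ Fin m) → ℝ, z ≠ 0 ∧
      z ⬝ᵥ ((Matrix.fromBlocks F₁₁ F₁₂ F₁₂ᵀ F₂₂) *ᵥ z) < 0)
    (η : ℝ) (hη : 0 < η) :
    ∃ μ : ℝ, 0 < μ ∧ μ < 1 ∧
      (Matrix.fromBlocks
        (((1 - μ) / η) • H₁ + μ • F₁₁) (Real.sqrt μ • F₁₂)
        (Real.sqrt μ • F₁₂ᵀ) (((1 - μ) / η) • H₂ + μ • F₂₂)).det = 0 :=
  bpalm_strict_saddle_unstable_general n m H₁ H₂ F₁₁ F₂₂ F₁₂ hF₁₁symm hF₂₂symm hH₁pd hH₂pd hFneg η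
    hη
end
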